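/- Let A ∈ R^{m×n}, y = A x⋆ + n with ‖n‖₂ ≤ δ, and let x̂ minimize a convex function f over {x : ‖y − Ax‖₂ ≤ δ}. Suppose the tangent cone T_f of f at x⋆ satisfies ‖Ah‖₂ ≥ ε‖h‖₂ for all h ∈ T_f, for some ε > 0. Then ‖x̂ − x⋆‖₂ ≤ 2δ/ε. -/

import Mathlib

/-!
Both `x̂` and `x⋆` are feasible, so `A x̂` and `A x⋆` lie within `δ` of `y` and hence
`‖A (x̂ - x⋆)‖ ≤ 2δ`. Since `x̂` is a minimizer and `x⋆` is feasible, `f x̂ ≤ f x⋆`, so the error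
`x̂ - x⋆` is a descent direction of `f` at `x⋆` (take `t = 1`), where `A` is bounded below by `ε`.
-/

noncomputable def mulVecE {m n : ℕ} (A : Matrix (Fin m) (Fin n) ℝ)
    (x : EuclideanSpace ℝ (Fin n)) : EuclideanSpace ℝ (Fin m) := WithLp.toLp 2 (A.mulVec x)

/-- The tangent cone `T_f` of the paper. -/
def descentCone {E : Type*} [AddCommGroup E] [Module ℝ E] (f : E → ℝ) (x : E) : Set E :=
  {d | ∃ t : ℝ, 0 < t ∧ f (x + t • d) ≤ f x}

theorem sub_mem_descentCone {E : Type*} [AddCommGroup E] [Module ℝ E] {f : E → ℝ} {x x' : E}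
    (h : f x' ≤ f x) : x' - x ∈ descentCone f x :=
  ⟨1, one_pos, by rwa [one_smul, add_sub_cancel]⟩

theorem norm_map_sub_le_two_mul {E F : Type*} [AddCommGroup E] [SeminormedAddCommGroup F]
    (L : E →+ F) {y : F} {x x' : E} {δ : ℝ} (hx : ‖y - L x‖ ≤ δ) (hx' : ‖y - L x'‖ ≤ δ) :
    ‖L (x' - x)‖ ≤ 2 * δ :=
  calc ‖L (x' - x)‖ = ‖(y - L x) - (y - L x')‖ := by rw [map_sub, sub_sub_sub_cancel_left]
    _ ≤ ‖y - L x‖ + ‖y - L x'‖ := norm_sub_le _ _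
    _ ≤ 2 * δ := by linarith

theorem norm_sub_le_of_lowerBound_on_descentCone {E F : Type*} [SeminormedAddCommGroup E]
    [Module ℝ E] [SeminormedAddCommGroup F] (L : E →+ F) (f : E → ℝ) {y : F} {x x' : E}
    {δ ε : ℝ} (hε : 0 < ε) (hx : ‖y - L x‖ ≤ δ) (hx' : ‖y - L x'‖ ≤ δ) (hfx : f x' ≤ f x)
    (hL : ∀ h ∈ descentCone f x, ε * ‖h‖ ≤ ‖L h‖) :
    ‖x' - x‖ ≤ 2 * δ / ε := by
  rw [le_div_iff₀ hε, mul_comm]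
  exact (hL _ (sub_mem_descentCone hfx)).trans (norm_map_sub_le_two_mul L hx hx')

theorem error_bound_of_restricted_eigenvalue_general {m n : ℕ} (A : Matrix (Fin m) (Fin n) ℝ)
    (xstar xhat : EuclideanSpace ℝ (Fin n)) (noise y : EuclideanSpace ℝ (Fin m))
    (δ ε : ℝ) (hε : 0 < ε)
    (hy : y = mulVecE A xstar + noise) (hnoise : ‖noise‖ ≤ δ)
    (f : EuclideanSpace ℝ (Fin n) → ℝ)
    (hfeas : ‖y - mulVecE A xhat‖ ≤ δ)
    (hmin : ∀ x, ‖y - mulVecE A x‖ ≤ δ → f xhat ≤ f x)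
    (hRE : ∀ h : EuclideanSpace ℝ (Fin n),
      h ∈ {d | ∃ t : ℝ, 0 < t ∧ f (xstar + t • d) ≤ f xstar} →
        ε * ‖h‖ ≤ ‖mulVecE A h‖) :
    ‖xhat - xstar‖ ≤ 2 * δ / ε := by
  have hstar : ‖y - mulVecE A xstar‖ ≤ δ := by rwa [hy, add_sub_cancel_left]
  -- `Matrix.toLpLin 2 2 A` is definitionally `mulVecE A`, so `hRE` applies as is.
  exact norm_sub_le_of_lowerBound_on_descentCone (Matrix.toLpLin 2 2 A).toAddMonoidHom f
    hε hstar hfeas (hmin xstar hstar) hRE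

/-- If `y = A x⋆ + noise` with `‖noise‖₂ ≤ δ`, `x̂` minimizes a convex `f` over the feasible
set `{x : ‖y − Ax‖₂ ≤ δ}`, and `‖Ah‖₂ ≥ ε‖h‖₂` for all `h` in the tangent cone of `f`
at `x⋆`, then `‖x̂ − x⋆‖₂ ≤ 2δ/ε`. -/
theorem error_bound_of_restricted_eigenvalue {m n : ℕ} (A : Matrix (Fin m) (Fin n) ℝ)
    (xstar xhat : EuclideanSpace ℝ (Fin n)) (noise y : EuclideanSpace ℝ (Fin m))
    (δ ε : ℝ) (hδ : 0 ≤ δ) (hε : 0 < ε)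
    (hy : y = mulVecE A xstar + noise) (hnoise : ‖noise‖ ≤ δ)
    (f : EuclideanSpace ℝ (Fin n) → ℝ) (hf : ConvexOn ℝ Set.univ f)
    (hfeas : ‖y - mulVecE A xhat‖ ≤ δ)
    (hmin : ∀ x, ‖y - mulVecE A x‖ ≤ δ → f xhat ≤ f x)
    (hRE : ∀ h : EuclideanSpace ℝ (Fin n),
      h ∈ {d | ∃ t : ℝ, 0 < t ∧ f (xstar + t • d) ≤ f xstar} →
        ε * ‖h‖ ≤ ‖mulVecE A h‖) :
    ‖xhat - xstar‖ ≤ 2 * δ / ε :=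
  error_bound_of_restricted_eigenvalue_general A xstar xhat noise y δ ε hε hy hnoise f hfeas hmin
    hRE
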